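/- Let Π_Y(t; x, y) := Σ_{k∈ℤ} [ G_t(x − 2bk + y) + G_t(x − 2bk − y) ] where G_t(x) = e^{−x²/(2t)}/√(2πt) is the Gaussian kernel and b > 0 is fixed. Then there exist constants 0 < c < C such that for all t ∈ (0,1]: (i) inf_{x∈(0,b)} Π_Y(t; x, x) ≥ c t^{−1/2}, and (ii) sup_{(x,y)∈(0,b)²} Π_Y(t; x, y) ≤ C t^{−1/2}. -/

import Mathlib

open MeasureTheory Real

/-- The Gaussian (heat) kernel on `ℝ`. -/
noncomputable def gaussKer (t x : ℝ) : ℝ := Real.exp (-x ^ 2 / (2 * t)) / Real.sqrt (2 * π * t)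

/-- The transition kernel of reflected Brownian motion on the interval `(0,b)`. -/
noncomputable def PiY (b t x y : ℝ) : ℝ :=
  ∑' k : ℤ, (gaussKer t (x - 2 * b * k + y) + gaussKer t (x - 2 * b * k - y))

/-! Every image `x - 2bk ± y` of points of `[0, b]` lies within `2b` of the lattice point `2bk`,
so at unit time its Gaussian weight is at most `e^{2b²} (e^{-b²})^{|k|}`. Since `e^{-z/t}` increases
in `t`, for `t ≤ 1` the lattice sum is at most `(2πt)^{-1/2}` times a convergent geometric sum, while
the `k = 0` image of `x` in `Π_Y(t; x, x)` alone contributes `(2πt)^{-1/2}`. -/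

lemma gaussKer_nonneg (t x : ℝ) : 0 ≤ gaussKer t x :=
  div_nonneg (exp_nonneg _) (sqrt_nonneg _)

lemma gaussKer_eq {t : ℝ} (ht : 0 < t) (x : ℝ) :
    gaussKer t x = (√(2 * π))⁻¹ * t ^ (-(1 / 2) : ℝ) * exp (-x ^ 2 / (2 * t)) := by
  rw [gaussKer, sqrt_mul (by positivity), rpow_neg ht.le, ← sqrt_eq_rpow, div_eq_inv_mul, mul_inv]

lemma gaussKer_zero {t : ℝ} (ht : 0 < t) : gaussKer t 0 = (√(2 * π))⁻¹ * t ^ (-(1 / 2) : ℝ) := by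
  simp [gaussKer_eq ht]

lemma exp_neg_sq_div_le_of_le_one {t : ℝ} (ht : t ∈ Set.Ioc (0 : ℝ) 1) (x : ℝ) :
    exp (-x ^ 2 / (2 * t)) ≤ exp (-x ^ 2 / 2) := by
  obtain ⟨ht0, ht1⟩ := ht
  rw [exp_le_exp, neg_div, neg_div, neg_le_neg_iff]
  gcongr
  linarith

lemma exp_neg_sq_sub_le {b u : ℝ} (hu : |u| ≤ 2 * b) (k : ℤ) :
    exp (-(u - 2 * b * k) ^ 2 / 2) ≤ exp (2 * b ^ 2) * exp (-b ^ 2) ^ k.natAbs := by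
  rw [← exp_nat_mul, ← exp_add, exp_le_exp]
  have hu2 : u ^ 2 ≤ 4 * b ^ 2 := by nlinarith [sq_abs u, abs_nonneg u]
  have hk : (k.natAbs : ℝ) ≤ (k : ℝ) ^ 2 := by
    rw [Nat.cast_natAbs]
    exact_mod_cast Int.natAbs_le_self_sq k
  -- `(u - c)² ≥ c²/2 - u²` with `c = 2bk`
  nlinarith [sq_nonneg (2 * u - 2 * b * k)]

lemma summable_pow_natAbs {r : ℝ} (hr0 : 0 ≤ r) (hr1 : r < 1) :
    Summable (fun k : ℤ => r ^ k.natAbs) := by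
  apply Summable.of_nat_of_neg <;> simpa using summable_geometric_of_lt_one hr0 hr1

lemma exp_neg_sq_lt_one {b : ℝ} (hb : b ≠ 0) : exp (-b ^ 2) < 1 :=
  exp_lt_one_iff.2 (by simpa using pow_pos (abs_pos.2 hb) 2)

noncomputable def gaussianLatticeConst (b : ℝ) : ℝ :=
  2 * exp (2 * b ^ 2) * ∑' k : ℤ, exp (-b ^ 2) ^ k.natAbs

lemma one_lt_gaussianLatticeConst {b : ℝ} (hb : b ≠ 0) : 1 < gaussianLatticeConst b := by
  have hS : 1 ≤ ∑' k : ℤ, exp (-b ^ 2) ^ k.natAbs := by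
    simpa using (summable_pow_natAbs (exp_nonneg _) (exp_neg_sq_lt_one hb)).le_tsum 0
      (fun k _ => pow_nonneg (exp_nonneg _) _)
  have he : 1 ≤ exp (2 * b ^ 2) := one_le_exp (by positivity)
  unfold gaussianLatticeConst
  nlinarith

lemma gaussKer_sub_le {b t u : ℝ} (ht : t ∈ Set.Ioc (0 : ℝ) 1) (hu : |u| ≤ 2 * b) (k : ℤ) :
    gaussKer t (u - 2 * b * k) ≤
      (√(2 * π))⁻¹ * t ^ (-(1 / 2) : ℝ) * (exp (2 * b ^ 2) * exp (-b ^ 2) ^ k.natAbs) := by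
  rw [gaussKer_eq ht.1]
  have ht0 : 0 ≤ t := ht.1.le
  gcongr
  exact (exp_neg_sq_div_le_of_le_one ht _).trans (exp_neg_sq_sub_le hu k)

lemma PiY_term_le {b t x y : ℝ} (ht : t ∈ Set.Ioc (0 : ℝ) 1) (hx : x ∈ Set.Icc 0 b)
    (hy : y ∈ Set.Icc 0 b) (k : ℤ) :
    gaussKer t (x - 2 * b * k + y) + gaussKer t (x - 2 * b * k - y) ≤
      (√(2 * π))⁻¹ * t ^ (-(1 / 2) : ℝ) * (2 * exp (2 * b ^ 2) * exp (-b ^ 2) ^ k.natAbs) := by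
  obtain ⟨hx0, hxb⟩ := hx
  obtain ⟨hy0, hyb⟩ := hy
  have hsum := gaussKer_sub_le ht (abs_le.2 ⟨by linarith, by linarith⟩ : |x + y| ≤ 2 * b) k
  have hdiff := gaussKer_sub_le ht (abs_le.2 ⟨by linarith, by linarith⟩ : |x - y| ≤ 2 * b) k
  rw [show x - 2 * b * k + y = x + y - 2 * b * k by ring,
    show x - 2 * b * k - y = x - y - 2 * b * k by ring]
  linarith

lemma summable_PiY_majorant {b : ℝ} (hb : b ≠ 0) (c : ℝ) :
    Summable (fun k : ℤ => c * (2 * exp (2 * b ^ 2) * exp (-b ^ 2) ^ k.natAbs)) :=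
  ((summable_pow_natAbs (exp_nonneg _) (exp_neg_sq_lt_one hb)).mul_left _).mul_left c

lemma summable_PiY_term {b t x y : ℝ} (hb : b ≠ 0) (ht : t ∈ Set.Ioc (0 : ℝ) 1)
    (hx : x ∈ Set.Icc 0 b) (hy : y ∈ Set.Icc 0 b) :
    Summable (fun k : ℤ => gaussKer t (x - 2 * b * k + y) + gaussKer t (x - 2 * b * k - y)) :=
  (summable_PiY_majorant hb _).of_nonneg_of_le
    (fun _ => add_nonneg (gaussKer_nonneg _ _) (gaussKer_nonneg _ _)) (PiY_term_le ht hx hy)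

lemma PiY_le {b t x y : ℝ} (hb : b ≠ 0) (ht : t ∈ Set.Ioc (0 : ℝ) 1)
    (hx : x ∈ Set.Icc 0 b) (hy : y ∈ Set.Icc 0 b) :
    PiY b t x y ≤ (√(2 * π))⁻¹ * gaussianLatticeConst b * t ^ (-(1 / 2) : ℝ) :=
  calc PiY b t x y
      ≤ ∑' k : ℤ, (√(2 * π))⁻¹ * t ^ (-(1 / 2) : ℝ) *
          (2 * exp (2 * b ^ 2) * exp (-b ^ 2) ^ k.natAbs) :=
        (summable_PiY_term hb ht hx hy).tsum_le_tsum (PiY_term_le ht hx hy)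
          (summable_PiY_majorant hb _)
    _ = (√(2 * π))⁻¹ * gaussianLatticeConst b * t ^ (-(1 / 2) : ℝ) := by
        rw [tsum_mul_left, tsum_mul_left, gaussianLatticeConst]
        ring

lemma gaussKer_zero_le_PiY {b t x : ℝ} (hb : b ≠ 0) (ht : t ∈ Set.Ioc (0 : ℝ) 1)
    (hx : x ∈ Set.Icc 0 b) : gaussKer t 0 ≤ PiY b t x x := by
  have hk0 := (summable_PiY_term hb ht hx hx).le_tsum 0
    (fun _ _ => add_nonneg (gaussKer_nonneg _ _) (gaussKer_nonneg _ _))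
  simp only [Int.cast_zero, mul_zero, sub_zero, sub_self] at hk0
  rw [PiY]
  linarith [gaussKer_nonneg t (x + x)]

/-- Transition density bounds on the interval: there are constants `0 < c < C` such that
for all `t ∈ (0,1]`, `Π_Y(t;x,x) ≥ c t^{−1/2}` for all `x ∈ (0,b)` and
`Π_Y(t;x,y) ≤ C t^{−1/2}` for all `x, y ∈ (0,b)`. -/
theorem interval_transition_density_bounds (b : ℝ) (hb : 0 < b) :
    ∃ c C : ℝ, 0 < c ∧ c < C ∧ ∀ t ∈ Set.Ioc (0 : ℝ) 1,
      (∀ x ∈ Set.Ioo (0 : ℝ) b, c * t ^ (-(1/2) : ℝ) ≤ PiY b t x x) ∧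
      (∀ x ∈ Set.Ioo (0 : ℝ) b, ∀ y ∈ Set.Ioo (0 : ℝ) b,
        PiY b t x y ≤ C * t ^ (-(1/2) : ℝ)) := by
  refine ⟨(√(2 * π))⁻¹, (√(2 * π))⁻¹ * gaussianLatticeConst b, by positivity,
    lt_mul_of_one_lt_right (by positivity) (one_lt_gaussianLatticeConst hb.ne'),
    fun t ht => ⟨fun x hx => ?_, fun x hx y hy => ?_⟩⟩
  · rw [← gaussKer_zero ht.1]
    exact gaussKer_zero_le_PiY hb.ne' ht (Set.Ioo_subset_Icc_self hx)
  · exact PiY_le hb.ne' ht (Set.Ioo_subset_Icc_self hx) (Set.Ioo_subset_Icc_self hy)
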